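/- arXiv:1505.04167 — 3 statements merged into one kernel-verified Lean document; each statement's English description precedes it below -/
import Mathlib

section
/- For all α > 0, β > 0 and u ∈ ℝ, the function z ↦ (e^{iuz} − 1) z^{-1} e^{-βz} is integrable on (0,∞) and exp(α ∫_0^∞ (e^{iuz} − 1) z^{-1} e^{-βz} dz) = (1 − iu/β)^{-α}, where the complex power is the principal branch. -/
open MeasureTheory Real Complex

/-!
Writing `(e^{iuz} - 1) z⁻¹ = i ∫₀ᵘ e^{ivz} dv`, the integral becomes a double integral of
`i e^{(iv - β) z}` over `(0, u] × (0, ∞)`, which is dominated by `e^{-βz}`. Fubini then gives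
`i ∫₀ᵘ (β - iv)⁻¹ dv = -log (1 - iu/β)`, and `exp (-α log w) = w ^ (-α)` is the principal power.
-/

open Set Function

theorem one_sub_ofReal_mul_I_div_ofReal_mem_slitPlane (u β : ℝ) :
    1 - u * I / β ∈ slitPlane :=
  mem_slitPlane_iff.mpr (.inl (by simp [div_ofReal_re]))

theorem integral_I_mul_inv_ofReal_sub_mul_I {β : ℝ} (hβ : 0 < β) (u : ℝ) :
    ∫ v in (0 : ℝ)..u, I * ((β : ℂ) - v * I)⁻¹ = -log (1 - u * I / β) := by
  have hβ' : (β : ℂ) ≠ 0 := ofReal_ne_zero.mpr hβ.ne'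
  have hne (v : ℝ) : (β : ℂ) - v * I ≠ 0 := fun h => by simpa [hβ.ne'] using congrArg re h
  have hderiv (v : ℝ) :
      HasDerivAt (fun v : ℝ => -log (1 - v * I / β)) (I * ((β : ℂ) - v * I)⁻¹) v := by
    have hlin : HasDerivAt (fun v : ℝ => 1 - (v : ℂ) * I / β) (-(I / β)) v := by
      simpa [mul_div_assoc] using
        ((hasDerivAt_id (v : ℂ)).comp_ofReal.mul_const (I / β)).const_sub 1
    refine (hlin.clog_real (one_sub_ofReal_mul_I_div_ofReal_mem_slitPlane v β)).neg.congr_deriv ?_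
    rw [one_sub_div hβ', neg_div, neg_neg, div_div_div_cancel_right₀ hβ', div_eq_mul_inv]
  have hcont : Continuous fun v : ℝ => I * ((β : ℂ) - v * I)⁻¹ :=
    continuous_const.mul (Continuous.inv₀ (by fun_prop) hne)
  rw [intervalIntegral.integral_eq_sub_of_hasDerivAt (fun v _ => hderiv v)
    (hcont.intervalIntegrable 0 u)]
  simp

theorem exp_mul_I_sub_one_mul_inv_mul_exp_eq_integral (β u : ℝ) {z : ℝ} (hz : z ≠ 0) :
    (cexp (u * z * I) - 1) * (z : ℂ)⁻¹ * cexp (-β * z)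
      = I * ∫ v in (0 : ℝ)..u, cexp ((v * I - β) * z) := by
  have hzI : (z : ℂ) * I ≠ 0 := mul_ne_zero (ofReal_ne_zero.mpr hz) I_ne_zero
  have hsplit (v : ℝ) : cexp ((v * I - β) * z) = cexp (-β * z) * cexp (z * I * v) := by
    rw [← Complex.exp_add]; ring_nf
  simp_rw [hsplit, intervalIntegral.integral_const_mul, integral_exp_mul_complex hzI,
    ofReal_zero, mul_zero, Complex.exp_zero]
  field_simp

theorem integrable_exp_mul_I_sub_mul_prod {β : ℝ} (hβ : 0 < β) (a b : ℝ) :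
    Integrable (uncurry fun v z : ℝ => cexp ((v * I - β) * z))
      ((volume.restrict (uIoc a b)).prod (volume.restrict (Ioi 0))) := by
  have : IsFiniteMeasure (volume.restrict (uIoc a b)) := isFiniteMeasure_restrict_Ioc _ _
  have hdom : Integrable (fun p : ℝ × ℝ => (1 : ℝ) * rexp (-β * p.2))
      ((volume.restrict (uIoc a b)).prod (volume.restrict (Ioi 0))) :=
    (integrable_const 1).mul_prod (exp_neg_integrableOn_Ioi 0 hβ)
  refine hdom.mono' (by fun_prop) (ae_of_all _ fun ⟨v, z⟩ => le_of_eq ?_)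
  simp [Complex.norm_exp, mul_re]

theorem integral_Ioi_exp_mul_I_sub_mul {β : ℝ} (hβ : 0 < β) (v : ℝ) :
    ∫ z in Ioi (0 : ℝ), cexp ((v * I - β) * z) = ((β : ℂ) - v * I)⁻¹ := by
  rw [integral_exp_mul_complex_Ioi (by simpa using hβ), ofReal_zero, mul_zero, Complex.exp_zero,
    neg_div, ← neg_sub, div_neg, neg_neg, one_div]

-- The integrand is, up to a constant, the `v`-marginal of an integrable function on the product.
theorem integrableOn_Ioi_exp_mul_I_sub_one_mul_inv_mul_exp {β : ℝ} (hβ : 0 < β) (u : ℝ) :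
    IntegrableOn (fun z : ℝ => (cexp (u * z * I) - 1) * (z : ℂ)⁻¹ * cexp (-β * z)) (Ioi 0) := by
  have hF := (integrable_exp_mul_I_sub_mul_prod hβ 0 u).integral_prod_right
  refine ((hF.smul (if (0 : ℝ) ≤ u then 1 else -1 : ℝ)).const_mul I).congr ?_
  filter_upwards [ae_restrict_mem measurableSet_Ioi] with z hz
  rw [exp_mul_I_sub_one_mul_inv_mul_exp_eq_integral β u (ne_of_gt hz),
    intervalIntegral.intervalIntegral_eq_integral_uIoc]
  rfl

theorem integral_Ioi_exp_mul_I_sub_one_mul_inv_mul_exp {β : ℝ} (hβ : 0 < β) (u : ℝ) :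
    ∫ z in Ioi (0 : ℝ), (cexp (u * z * I) - 1) * (z : ℂ)⁻¹ * cexp (-β * z)
      = -log (1 - u * I / β) := calc
  _ = ∫ z in Ioi (0 : ℝ), I * ∫ v in (0 : ℝ)..u, cexp ((v * I - β) * z) :=
    setIntegral_congr_fun measurableSet_Ioi fun z hz =>
      exp_mul_I_sub_one_mul_inv_mul_exp_eq_integral β u (ne_of_gt hz)
  _ = I * ∫ v in (0 : ℝ)..u, ∫ z in Ioi (0 : ℝ), cexp ((v * I - β) * z) := by
    rw [integral_const_mul, intervalIntegral_integral_swap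
      (integrable_exp_mul_I_sub_mul_prod hβ 0 u)]
  _ = -log (1 - u * I / β) := by
    simp_rw [integral_Ioi_exp_mul_I_sub_mul hβ, ← intervalIntegral.integral_const_mul]
    exact integral_I_mul_inv_ofReal_sub_mul_I hβ u

theorem gamma_levy_khintchine_general
    (α β u : ℝ) (hβ : 0 < β) :
    IntegrableOn
      (fun z : ℝ => (Complex.exp (u * z * Complex.I) - 1) * (z : ℂ)⁻¹
        * Complex.exp (-β * z)) (Set.Ioi 0) volume
    ∧ Complex.exp ((α : ℂ) *
        ∫ z in Set.Ioi (0 : ℝ),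
          (Complex.exp (u * z * Complex.I) - 1) * (z : ℂ)⁻¹ * Complex.exp (-β * z))
      = (1 - u * Complex.I / β) ^ (-(α : ℂ)) := by
  refine ⟨integrableOn_Ioi_exp_mul_I_sub_one_mul_inv_mul_exp hβ u, ?_⟩
  rw [integral_Ioi_exp_mul_I_sub_one_mul_inv_mul_exp hβ u,
    cpow_def_of_ne_zero (slitPlane_ne_zero (one_sub_ofReal_mul_I_div_ofReal_mem_slitPlane u β))]
  congr 1
  ring

/-- Lévy–Khintchine form of the Gamma characteristic function: for `α, β > 0` and `u ∈ ℝ`,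
the function `z ↦ (e^{iuz} − 1) z⁻¹ e^{-βz}` is integrable on `(0,∞)` and
`exp(α ∫_0^∞ (e^{iuz} − 1) z⁻¹ e^{-βz} dz) = (1 − iu/β)^{-α}` (principal branch). -/
theorem gamma_levy_khintchine
    (α β u : ℝ) (hα : 0 < α) (hβ : 0 < β) :
    IntegrableOn
      (fun z : ℝ => (Complex.exp (u * z * Complex.I) - 1) * (z : ℂ)⁻¹
        * Complex.exp (-β * z)) (Set.Ioi 0) volume
    ∧ Complex.exp ((α : ℂ) *
        ∫ z in Set.Ioi (0 : ℝ),
          (Complex.exp (u * z * Complex.I) - 1) * (z : ℂ)⁻¹ * Complex.exp (-β * z))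
      = (1 - u * Complex.I / β) ^ (-(α : ℂ)) :=
  gamma_levy_khintchine_general α β u hβ
end

section
/- Let a > 0 and λ > 0, and let I : [0,∞) → [0,∞) be a continuous function satisfying I(t) ≥ a² + λ² ∫_0^t (t−s) I(s) ds for all t ≥ 0. Then I(t) ≥ a² cosh(λt) for all t ≥ 0; in particular, there exists t₀ > 0 such that I(t) ≥ (a²/2) e^{λt} for all t ≥ t₀. -/
/-!
Iterating the inequality `I ≥ a² + λ² ∫₀ᵗ (t − s) I(s) ds`, starting from `I ≥ 0`, bounds `I`
from below by `a²` times the Taylor partial sums of `cosh (λ t)`: the Volterra operator maps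
`(λ s)^{2k} / (2k)!` to `(λ t)^{2k+2} / (2k+2)!`. Letting the number of terms tend to infinity
gives `I(t) ≥ a² cosh (λ t) ≥ (a² / 2) e^{λ t}`.
-/

open MeasureTheory Real Filter intervalIntegral Nat Topology

lemma integral_sub_mul_pow (t : ℝ) (m : ℕ) :
    ∫ s in (0 : ℝ)..t, (t - s) * s ^ m = t ^ (m + 2) / ((m + 1) * (m + 2)) := by
  have hsplit : (fun s : ℝ => (t - s) * s ^ m) = fun s => t * s ^ m - s ^ (m + 1) := by
    ext s; ring
  rw [hsplit, integral_sub ((continuous_pow m).intervalIntegrable 0 t |>.const_mul t)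
    ((continuous_pow (m + 1)).intervalIntegrable 0 t), intervalIntegral.integral_const_mul,
    integral_pow, integral_pow]
  field_simp
  push_cast
  ring

noncomputable def coshTaylor (n : ℕ) (x : ℝ) : ℝ :=
  ∑ k ∈ Finset.range n, x ^ (2 * k) / (2 * k)!

lemma continuous_coshTaylor (n : ℕ) : Continuous (coshTaylor n) := by
  unfold coshTaylor; fun_prop

lemma tendsto_coshTaylor (x : ℝ) : Tendsto (coshTaylor · x) atTop (𝓝 (cosh x)) :=
  (hasSum_cosh x).tendsto_sum_nat

lemma sq_mul_integral_sub_mul_cosh_term (lam t : ℝ) (k : ℕ) :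
    lam ^ 2 * ∫ s in (0 : ℝ)..t, (t - s) * ((lam * s) ^ (2 * k) / (2 * k)!)
      = (lam * t) ^ (2 * (k + 1)) / (2 * (k + 1))! := by
  have hfac : ((2 * (k + 1))! : ℝ) = (2 * k + 1) * (2 * k + 2) * (2 * k)! := by
    rw [show 2 * (k + 1) = 2 * k + 1 + 1 by ring, factorial_succ, factorial_succ]
    push_cast; ring
  have hterm : (fun s => (t - s) * ((lam * s) ^ (2 * k) / (2 * k)!))
      = fun s => lam ^ (2 * k) / (2 * k)! * ((t - s) * s ^ (2 * k)) := by
    ext s; rw [mul_pow]; ring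
  rw [hterm, intervalIntegral.integral_const_mul, integral_sub_mul_pow, hfac]
  field_simp
  push_cast
  ring

lemma one_add_sq_mul_integral_sub_mul_coshTaylor (lam t : ℝ) (n : ℕ) :
    1 + lam ^ 2 * ∫ s in (0 : ℝ)..t, (t - s) * coshTaylor n (lam * s)
      = coshTaylor (n + 1) (lam * t) := by
  have hint : ∀ k ∈ Finset.range n, IntervalIntegrable
      (fun s => (t - s) * ((lam * s) ^ (2 * k) / (2 * k)!)) volume 0 t :=
    fun k _ => Continuous.intervalIntegrable (by fun_prop) 0 t
  simp only [coshTaylor, Finset.mul_sum]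
  rw [integral_finsetSum hint, Finset.mul_sum, Finset.sum_range_succ']
  simp only [sq_mul_integral_sub_mul_cosh_term]
  simp [add_comm]

lemma integral_sub_mul_mono {f g : ℝ → ℝ} {t : ℝ} (ht : 0 ≤ t)
    (hf : ContinuousOn f (Set.Icc 0 t)) (hg : ContinuousOn g (Set.Icc 0 t))
    (hfg : ∀ s ∈ Set.Icc 0 t, f s ≤ g s) :
    ∫ s in (0 : ℝ)..t, (t - s) * f s ≤ ∫ s in (0 : ℝ)..t, (t - s) * g s := by
  refine integral_mono_on ht ?_ ?_ fun s hs => ?_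
  · exact ((continuousOn_const.sub continuousOn_id).mul hf).intervalIntegrable_of_Icc ht
  · exact ((continuousOn_const.sub continuousOn_id).mul hg).intervalIntegrable_of_Icc ht
  · exact mul_le_mul_of_nonneg_left (hfg s hs) (sub_nonneg.mpr hs.2)

section Renewal

variable {c lam : ℝ} {I : ℝ → ℝ}

lemma mul_coshTaylor_le_of_renewal (hI : ContinuousOn I (Set.Ici 0))
    (hInonneg : ∀ t : ℝ, 0 ≤ t → 0 ≤ I t)
    (hineq : ∀ t : ℝ, 0 ≤ t → c + lam ^ 2 * ∫ s in (0 : ℝ)..t, (t - s) * I s ≤ I t)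
    (n : ℕ) {t : ℝ} (ht : 0 ≤ t) : c * coshTaylor n (lam * t) ≤ I t := by
  induction n generalizing t with
  | zero => simpa [coshTaylor] using hInonneg t ht
  | succ n ih =>
    have hcont : Continuous fun s => c * coshTaylor n (lam * s) := by
      have := continuous_coshTaylor n
      fun_prop
    have hmono := integral_sub_mul_mono ht hcont.continuousOn
      (hI.mono Set.Icc_subset_Ici_self) fun s hs => ih hs.1
    calc c * coshTaylor (n + 1) (lam * t)
        = c + lam ^ 2 * ∫ s in (0 : ℝ)..t, (t - s) * (c * coshTaylor n (lam * s)) := by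
          rw [← one_add_sq_mul_integral_sub_mul_coshTaylor]
          simp only [mul_left_comm _ c, intervalIntegral.integral_const_mul]
          ring
      _ ≤ c + lam ^ 2 * ∫ s in (0 : ℝ)..t, (t - s) * I s := by gcongr
      _ ≤ I t := hineq t ht

lemma mul_cosh_le_of_renewal (hI : ContinuousOn I (Set.Ici 0))
    (hInonneg : ∀ t : ℝ, 0 ≤ t → 0 ≤ I t)
    (hineq : ∀ t : ℝ, 0 ≤ t → c + lam ^ 2 * ∫ s in (0 : ℝ)..t, (t - s) * I s ≤ I t)
    {t : ℝ} (ht : 0 ≤ t) : c * cosh (lam * t) ≤ I t :=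
  le_of_tendsto ((tendsto_coshTaylor _).const_mul c)
    (Eventually.of_forall fun n => mul_coshTaylor_le_of_renewal hI hInonneg hineq n ht)

end Renewal

lemma exp_div_two_le_cosh (x : ℝ) : exp x / 2 ≤ cosh x := by
  rw [cosh_eq]
  linarith [exp_pos (-x)]

theorem renewal_inequality_lower_bound_general
    (a lam : ℝ)
    (I : ℝ → ℝ) (hI : ContinuousOn I (Set.Ici 0))
    (hInonneg : ∀ t : ℝ, 0 ≤ t → 0 ≤ I t)
    (hineq : ∀ t : ℝ, 0 ≤ t →
      a ^ 2 + lam ^ 2 * ∫ s in (0 : ℝ)..t, (t - s) * I s ≤ I t) :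
    (∀ t : ℝ, 0 ≤ t → a ^ 2 * Real.cosh (lam * t) ≤ I t)
    ∧ ∃ t₀ : ℝ, 0 < t₀ ∧ ∀ t : ℝ, t₀ ≤ t → (a ^ 2 / 2) * Real.exp (lam * t) ≤ I t := by
  have hcosh : ∀ t : ℝ, 0 ≤ t → a ^ 2 * cosh (lam * t) ≤ I t :=
    fun t ht => mul_cosh_le_of_renewal hI hInonneg hineq ht
  refine ⟨hcosh, 1, one_pos, fun t ht => ?_⟩
  calc a ^ 2 / 2 * exp (lam * t) = a ^ 2 * (exp (lam * t) / 2) := by ring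
    _ ≤ a ^ 2 * cosh (lam * t) := by gcongr; exact exp_div_two_le_cosh _
    _ ≤ I t := hcosh t (by linarith)

/-- If `I` is continuous, nonnegative on `[0,∞)` and satisfies the renewal inequality
`I(t) ≥ a² + λ² ∫_0^t (t−s) I(s) ds`, then `I(t) ≥ a² cosh(λt)`; in particular
`I(t) ≥ (a²/2) e^{λt}` for all large `t`. -/
theorem renewal_inequality_lower_bound
    (a lam : ℝ) (ha : 0 < a) (hlam : 0 < lam)
    (I : ℝ → ℝ) (hI : ContinuousOn I (Set.Ici 0))
    (hInonneg : ∀ t : ℝ, 0 ≤ t → 0 ≤ I t)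
    (hineq : ∀ t : ℝ, 0 ≤ t →
      a ^ 2 + lam ^ 2 * ∫ s in (0 : ℝ)..t, (t - s) * I s ≤ I t) :
    (∀ t : ℝ, 0 ≤ t → a ^ 2 * Real.cosh (lam * t) ≤ I t)
    ∧ ∃ t₀ : ℝ, 0 < t₀ ∧ ∀ t : ℝ, t₀ ≤ t → (a ^ 2 / 2) * Real.exp (lam * t) ≤ I t :=
  renewal_inequality_lower_bound_general a lam I hI hInonneg hineq
end

section
/- Let G(t,x) = (1/2)·1_{{|x| ≤ t}} for t > 0, x ∈ ℝ, let b : ℝ → ℝ be Lipschitz continuous with constant L, and let β > 0. For a function Φ : [0,∞) × ℝ → ℝ set ‖Φ‖_β := sup_{t≥0, x∈ℝ} e^{-βt} |Φ(t,x)|. Then for any measurable functions u, v : [0,∞) × ℝ → ℝ with ‖u‖_β < ∞ and ‖v‖_β < ∞, one has for all t ≥ 0, x ∈ ℝ: e^{-βt} |∫_0^t ∫_ℝ G(t-s, x-y)[b(u(s,y)) − b(v(s,y))] dy ds| ≤ (L/β²) ‖u − v‖_β. -/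
open MeasureTheory Real

/-! The spatial integral of `G(t - s, x - ·)` is `t - s`, and the Lipschitz bound with the weighted
norm gives `|b(u(s,y)) - b(v(s,y))| ≤ L e^{βs} ‖u - v‖_β`; so the double integral is at most
`L ‖u - v‖_β ∫_0^t e^{βs} (t - s) ds = L ‖u - v‖_β (e^{βt} - βt - 1) / β²`, which after
multiplication by `e^{-βt}` is at most `L ‖u - v‖_β / β²`. -/

noncomputable def waveKernel (t x : ℝ) : ℝ := if |x| ≤ t then 1 / 2 else 0

lemma waveKernel_nonneg (t x : ℝ) : 0 ≤ waveKernel t x := by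
  unfold waveKernel
  positivity

lemma waveKernel_sub_eq_indicator (r x y : ℝ) :
    waveKernel r (x - y) = (Set.Icc (x - r) (x + r)).indicator (fun _ => 1 / 2) y := by
  have hmem : |x - y| ≤ r ↔ y ∈ Set.Icc (x - r) (x + r) := by
    rw [abs_le, Set.mem_Icc]
    constructor <;> rintro ⟨h₁, h₂⟩ <;> constructor <;> linarith
  unfold waveKernel Set.indicator
  simp only [hmem]

lemma integrable_waveKernel_sub (r x : ℝ) : Integrable fun y => waveKernel r (x - y) := by
  simp only [waveKernel_sub_eq_indicator]
  exact (integrable_indicator_iff measurableSet_Icc).mpr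
    (integrableOn_const measure_Icc_lt_top.ne)

lemma integral_waveKernel_sub {r : ℝ} (hr : 0 ≤ r) (x : ℝ) :
    ∫ y, waveKernel r (x - y) = r := by
  simp only [waveKernel_sub_eq_indicator]
  rw [integral_indicator_const _ measurableSet_Icc, Real.volume_real_Icc_of_le (by linarith),
    smul_eq_mul]
  ring

lemma norm_integral_waveKernel_sub_mul_le {r C x : ℝ} {f : ℝ → ℝ} (hr : 0 ≤ r)
    (hf : ∀ y, ‖f y‖ ≤ C) : ‖∫ y, waveKernel r (x - y) * f y‖ ≤ r * C := by
  have hbound : ∀ y, ‖waveKernel r (x - y) * f y‖ ≤ waveKernel r (x - y) * C := fun y => by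
    rw [norm_mul, Real.norm_of_nonneg (waveKernel_nonneg _ _)]
    exact mul_le_mul_of_nonneg_left (hf y) (waveKernel_nonneg _ _)
  calc ‖∫ y, waveKernel r (x - y) * f y‖
      ≤ ∫ y, waveKernel r (x - y) * C :=
        norm_integral_le_of_norm_le ((integrable_waveKernel_sub r x).mul_const C)
          (Filter.Eventually.of_forall hbound)
    _ = r * C := by rw [integral_mul_const, integral_waveKernel_sub hr]

lemma integral_exp_mul_mul_sub {β : ℝ} (hβ : β ≠ 0) (t : ℝ) :
    ∫ s in (0 : ℝ)..t, exp (β * s) * (t - s) = (exp (β * t) - β * t - 1) / β ^ 2 := by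
  have hderiv : ∀ s ∈ Set.uIcc (0 : ℝ) t,
      HasDerivAt (fun s => ((t - s) / β + 1 / β ^ 2) * exp (β * s))
        (exp (β * s) * (t - s)) s := fun s _ => by
    have hexp := ((hasDerivAt_id' s).const_mul β).exp
    have hlin := (((hasDerivAt_id' s).const_sub t).div_const β).add_const (1 / β ^ 2)
    refine (hlin.mul hexp).congr_deriv ?_
    field_simp
    ring
  have hcont : Continuous fun s => exp (β * s) * (t - s) := by fun_prop
  rw [intervalIntegral.integral_eq_sub_of_hasDerivAt hderiv (hcont.intervalIntegrable 0 t)]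
  field_simp
  simp only [mul_zero, exp_zero]
  ring

lemma exp_neg_mul_mul_integral_exp_mul_mul_sub_le {β t : ℝ} (hβ : 0 < β) (ht : 0 ≤ t) :
    exp (-β * t) * ∫ s in (0 : ℝ)..t, exp (β * s) * (t - s) ≤ 1 / β ^ 2 := by
  have hlin : 0 ≤ β * t + 1 := by positivity
  calc exp (-β * t) * ∫ s in (0 : ℝ)..t, exp (β * s) * (t - s)
      = exp (-β * t) * ((exp (β * t) - β * t - 1) / β ^ 2) := by
        rw [integral_exp_mul_mul_sub hβ.ne']
    _ ≤ exp (-β * t) * (exp (β * t) / β ^ 2) := by gcongr; linarith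
    _ = 1 / β ^ 2 := by rw [mul_div_assoc', ← exp_add]; simp

lemma bddAbove_range_mul_abs_sub {ι : Type*} {w f g : ι → ℝ} (hw : ∀ i, 0 ≤ w i)
    (hf : BddAbove (Set.range fun i => w i * |f i|))
    (hg : BddAbove (Set.range fun i => w i * |g i|)) :
    BddAbove (Set.range fun i => w i * |f i - g i|) := by
  obtain ⟨Cf, hCf⟩ := hf
  obtain ⟨Cg, hCg⟩ := hg
  refine ⟨Cf + Cg, Set.forall_mem_range.mpr fun i => ?_⟩
  calc w i * |f i - g i| ≤ w i * |f i| + w i * |g i| := by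
        rw [← mul_add]; exact mul_le_mul_of_nonneg_left (abs_sub _ _) (hw i)
    _ ≤ Cf + Cg := add_le_add (hCf ⟨i, rfl⟩) (hCg ⟨i, rfl⟩)

noncomputable def weightedSupNorm (β : ℝ) (Φ : ℝ → ℝ → ℝ) : ℝ :=
  ⨆ p : {t : ℝ // 0 ≤ t} × ℝ, exp (-β * p.1.1) * |Φ p.1.1 p.2|

lemma weightedSupNorm_nonneg (β : ℝ) (Φ : ℝ → ℝ → ℝ) : 0 ≤ weightedSupNorm β Φ :=
  Real.iSup_nonneg fun _ => by positivity

lemma abs_le_exp_mul_weightedSupNorm {β s : ℝ} {Φ : ℝ → ℝ → ℝ}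
    (hΦ : BddAbove (Set.range fun p : {t : ℝ // 0 ≤ t} × ℝ => exp (-β * p.1.1) * |Φ p.1.1 p.2|))
    (hs : 0 ≤ s) (y : ℝ) : |Φ s y| ≤ exp (β * s) * weightedSupNorm β Φ := by
  have hle : exp (-β * s) * |Φ s y| ≤ weightedSupNorm β Φ :=
    le_ciSup hΦ (⟨⟨s, hs⟩, y⟩ : {t : ℝ // 0 ≤ t} × ℝ)
  calc |Φ s y| = exp (β * s) * (exp (-β * s) * |Φ s y|) := by
        rw [← mul_assoc, ← exp_add]; simp
    _ ≤ exp (β * s) * weightedSupNorm β Φ := by gcongr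

theorem wave_convolution_lipschitz_estimate_general
    (G : ℝ → ℝ → ℝ) (hG : ∀ t x : ℝ, G t x = if |x| ≤ t then 1 / 2 else 0)
    (b : ℝ → ℝ) (L β : ℝ) (hβ : 0 < β)
    (hb : ∀ x y : ℝ, |b x - b y| ≤ L * |x - y|)
    (u v : ℝ → ℝ → ℝ)
    (hu : BddAbove (Set.range fun p : {t : ℝ // 0 ≤ t} × ℝ =>
      Real.exp (-β * p.1.1) * |u p.1.1 p.2|))
    (hv : BddAbove (Set.range fun p : {t : ℝ // 0 ≤ t} × ℝ =>
      Real.exp (-β * p.1.1) * |v p.1.1 p.2|)) :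
    ∀ t : ℝ, 0 ≤ t → ∀ x : ℝ,
      Real.exp (-β * t) *
        |∫ s in (0 : ℝ)..t, ∫ y : ℝ, G (t - s) (x - y) * (b (u s y) - b (v s y))|
      ≤ (L / β ^ 2) *
        ⨆ p : {t : ℝ // 0 ≤ t} × ℝ, Real.exp (-β * p.1.1) * |u p.1.1 p.2 - v p.1.1 p.2| := by
  intro t ht x
  obtain rfl : G = waveKernel := funext fun t => funext (hG t)
  set M := weightedSupNorm β fun s y => u s y - v s y
  have hL : 0 ≤ L := by simpa using (abs_nonneg _).trans (hb 1 0)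
  have hbdd := bddAbove_range_mul_abs_sub (fun _ => (exp_pos _).le) hu hv
  have hinner : ∀ s ∈ Set.Ioc 0 t, ‖∫ y, waveKernel (t - s) (x - y) * (b (u s y) - b (v s y))‖
      ≤ L * M * (exp (β * s) * (t - s)) := fun s hs => by
    have hpoint : ∀ y, ‖b (u s y) - b (v s y)‖ ≤ L * (exp (β * s) * M) := fun y =>
      (hb _ _).trans (mul_le_mul_of_nonneg_left
        (abs_le_exp_mul_weightedSupNorm (Φ := fun s y => u s y - v s y) hbdd hs.1.le y) hL)
    convert norm_integral_waveKernel_sub_mul_le (sub_nonneg.mpr hs.2) hpoint using 1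
    ring
  have hLM : 0 ≤ L * M := mul_nonneg hL (weightedSupNorm_nonneg _ _)
  calc exp (-β * t) * |∫ s in (0 : ℝ)..t, ∫ y, waveKernel (t - s) (x - y) * (b (u s y) - b (v s y))|
      ≤ exp (-β * t) * ∫ s in (0 : ℝ)..t, L * M * (exp (β * s) * (t - s)) := by
        gcongr
        exact intervalIntegral.norm_integral_le_of_norm_le ht
          (Filter.Eventually.of_forall hinner)
          ((by fun_prop : Continuous _).intervalIntegrable 0 t)
    _ = L * M * (exp (-β * t) * ∫ s in (0 : ℝ)..t, exp (β * s) * (t - s)) := by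
        rw [intervalIntegral.integral_const_mul]; ring
    _ ≤ L * M * (1 / β ^ 2) := by
        gcongr; exact exp_neg_mul_mul_integral_exp_mul_mul_sub_le hβ ht
    _ = L / β ^ 2 * M := by ring

/-- Lipschitz estimate for the space–time convolution with the wave kernel
`G(t,x) = (1/2)·1_{|x| ≤ t}` in the weighted sup norm
`‖Φ‖_β = sup_{t≥0, x∈ℝ} e^{-βt}|Φ(t,x)|`: if `b` is `L`-Lipschitz then
`e^{-βt} |∫_0^t ∫_ℝ G(t-s,x-y)[b(u(s,y)) − b(v(s,y))] dy ds| ≤ (L/β²) ‖u − v‖_β`. -/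
theorem wave_convolution_lipschitz_estimate
    (G : ℝ → ℝ → ℝ) (hG : ∀ t x : ℝ, G t x = if |x| ≤ t then 1 / 2 else 0)
    (b : ℝ → ℝ) (L β : ℝ) (hβ : 0 < β) (hL : 0 ≤ L)
    (hb : ∀ x y : ℝ, |b x - b y| ≤ L * |x - y|)
    (u v : ℝ → ℝ → ℝ)
    (hum : Measurable (Function.uncurry u)) (hvm : Measurable (Function.uncurry v))
    (hu : BddAbove (Set.range fun p : {t : ℝ // 0 ≤ t} × ℝ =>
      Real.exp (-β * p.1.1) * |u p.1.1 p.2|))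
    (hv : BddAbove (Set.range fun p : {t : ℝ // 0 ≤ t} × ℝ =>
      Real.exp (-β * p.1.1) * |v p.1.1 p.2|)) :
    ∀ t : ℝ, 0 ≤ t → ∀ x : ℝ,
      Real.exp (-β * t) *
        |∫ s in (0 : ℝ)..t, ∫ y : ℝ, G (t - s) (x - y) * (b (u s y) - b (v s y))|
      ≤ (L / β ^ 2) *
        ⨆ p : {t : ℝ // 0 ≤ t} × ℝ, Real.exp (-β * p.1.1) * |u p.1.1 p.2 - v p.1.1 p.2| :=
  wave_convolution_lipschitz_estimate_general G hG b L β hβ hb u v hu hv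
end
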